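/- arXiv:math/9909071 — 5 statements merged into one kernel-verified Lean document; each statement's English description precedes it below -/
import Mathlib

section
/- For a Hopf algebra H over a commutative ring, the map δ_n (defined as δ_{\{1,...,n\}} via inclusion-exclusion over Δ_E) satisfies δ_n = (id − unit∘ε)^{⊗n} ∘ Δⁿ for every n ≥ 1. -/
/- STATEMENT 1: For a Hopf algebra H over a commutative ring, the map δ_n
(defined as δ_{{1,...,n}} via inclusion-exclusion over Δ_E) satisfies
δ_n = (id − unit∘ε)^{⊗n} ∘ Δⁿ for every n ≥ 1. -/

open TensorProduct

noncomputable section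

universe u

/-- A bundled `R`-algebra, used to form iterated tensor powers. -/
structure AlgB (R : Type u) [CommRing R] : Type (u + 1) where
  X : Type u
  [ring : Ring X]
  [alg : Algebra R X]

attribute [instance] AlgB.ring AlgB.alg

section Mach

variable (R H : Type u) [CommRing R] [Ring H] [Algebra R H]

/-- The `n`-th tensor power `H^{⊗ n}` (with `H^{⊗ 0} = R`, `H^{⊗ 1} = H`). -/
def Tpow : ℕ → AlgB R
  | 0 => ⟨R⟩
  | 1 => ⟨H⟩
  | n + 2 => ⟨H ⊗[R] (Tpow (n + 1)).X⟩

/-- Apply a linear endomorphism of `H` in each tensor slot. -/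
def tmap : (n : ℕ) → (Fin n → (H →ₗ[R] H)) → ((Tpow R H n).X →ₗ[R] (Tpow R H n).X)
  | 0, _ => LinearMap.id
  | 1, f => f 0
  | n + 2, f => TensorProduct.map (f 0) (tmap (n + 1) fun i => f i.succ)

/-- The iterated coproduct `Δⁿ : H → H^{⊗ n}`, with `Δ⁰ = ε`, `Δ¹ = id`. -/
def Dit (cu : H →ₗ[R] R) (cm : H →ₗ[R] H ⊗[R] H) : (n : ℕ) → H →ₗ[R] (Tpow R H n).X
  | 0 => cu
  | 1 => LinearMap.id
  | n + 2 => (TensorProduct.map LinearMap.id (Dit cu cm (n + 1))) ∘ₗ cm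

/-- `unit ∘ ε : H → H`. -/
def uem (cu : H →ₗ[R] R) : H →ₗ[R] H := (Algebra.linearMap R H) ∘ₗ cu

/-- `Δ_E : H → H^{⊗ n}`: the iterated coproduct inserted into the slots of `E`,
with units (`unit ∘ ε`) in the slots outside `E`. -/
def DeltaE (cu : H →ₗ[R] R) (cm : H →ₗ[R] H ⊗[R] H) (n : ℕ) (E : Finset (Fin n)) :
    H →ₗ[R] (Tpow R H n).X :=
  (tmap R H n fun i => if i ∈ E then LinearMap.id else uem R H cu) ∘ₗ Dit R H cu cm n

/-- `δ_E := Σ_{E' ⊆ E} (-1)^{|E| - |E'|} Δ_{E'}`. -/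
def deltaE (cu : H →ₗ[R] R) (cm : H →ₗ[R] H ⊗[R] H) (n : ℕ) (E : Finset (Fin n)) :
    H →ₗ[R] (Tpow R H n).X :=
  ∑ E' ∈ E.powerset, ((-1 : ℤ) ^ (E.card - E'.card)) • DeltaE R H cu cm n E'

end Mach

/-! The slotwise map `tmap` is multilinear in its `n` endomorphism arguments, so expanding
`(id - uem)^{⊗ n}` slot by slot into the choices `id` / `-uem` produces one term for each set `E`
of slots carrying `id`, with sign `(-1)^(n - |E|)`: this is the inclusion–exclusion sum `δ_n`. -/

theorem MultilinearMap.map_sub_univ {R ι : Type*} {M : ι → Type*} {N : Type*} [CommRing R]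
    [∀ i, AddCommGroup (M i)] [∀ i, Module R (M i)] [AddCommGroup N] [Module R N]
    [DecidableEq ι] [Fintype ι] (f : MultilinearMap R M N) (m m' : ∀ i, M i) :
    f (m - m') = ∑ s : Finset ι, (-1 : ℤ) ^ sᶜ.card • f (s.piecewise m m') := by
  rw [sub_eq_add_neg, f.map_add_univ]
  refine Finset.sum_congr rfl fun s _ => ?_
  have hneg : s.piecewise m (-m') = fun i => (if i ∈ s then 1 else -1 : R) • s.piecewise m m' i := by
    ext i; by_cases hi : i ∈ s <;> simp [hi]
  rw [hneg, f.map_smul_univ, Finset.prod_ite, Finset.prod_const_one, one_mul, Finset.prod_const,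
    ← Int.cast_smul_eq_zsmul R]
  simp [Finset.filter_not, Finset.compl_eq_univ_sdiff]

section TensorPower

variable (R H : Type u) [CommRing R] [Ring H] [Algebra R H]

def tmapMultilinear :
    (n : ℕ) → MultilinearMap R (fun _ : Fin n => H →ₗ[R] H) (Module.End R (Tpow R H n).X)
  | 0 => MultilinearMap.constOfIsEmpty R _ LinearMap.id
  | 1 => MultilinearMap.ofSubsingleton R (H →ₗ[R] H) (H →ₗ[R] H) 0 LinearMap.id
  | n + 2 => LinearMap.uncurryLeft
      { toFun := fun f => (TensorProduct.mapBilinear (RingHom.id R) H _ H _ f).compMultilinearMap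
          (tmapMultilinear (n + 1))
        map_add' := fun f g => by
          rw [map_add]; exact LinearMap.add_compMultilinearMap _ _ _
        map_smul' := fun c f => by
          rw [map_smul]; exact LinearMap.smul_compMultilinearMap _ _ _ }

theorem tmapMultilinear_apply : ∀ (n : ℕ) (f : Fin n → H →ₗ[R] H),
    tmapMultilinear R H n f = tmap R H n f
  | 0, _ => rfl
  | 1, _ => rfl
  | n + 2, f => by
    show TensorProduct.map (f 0) (tmapMultilinear R H (n + 1) (Fin.tail f)) = _
    rw [tmapMultilinear_apply (n + 1)]
    rfl

end TensorPower

theorem statement1_general (R H : Type u) [CommRing R] [Ring H] [HopfAlgebra R H]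
    (n : ℕ) :
    deltaE R H Coalgebra.counit Coalgebra.comul n Finset.univ =
      (tmap R H n fun _ => LinearMap.id - uem R H Coalgebra.counit) ∘ₗ
        Dit R H Coalgebra.counit Coalgebra.comul n := by
  have expand := (tmapMultilinear R H n).map_sub_univ (fun _ => LinearMap.id)
    (fun _ => uem R H Coalgebra.counit)
  simp only [tmapMultilinear_apply, Pi.sub_def] at expand
  rw [expand, ← LinearMap.lcomp_apply' (S := R), map_sum, deltaE, Finset.powerset_univ]
  refine Finset.sum_congr rfl fun E _ => ?_
  rw [map_zsmul, Finset.card_compl, Finset.card_univ]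
  rfl

/-- `δ_n = (id − unit∘ε)^{⊗ n} ∘ Δⁿ` for all `n ≥ 1`. -/
theorem statement1 (R H : Type u) [CommRing R] [Ring H] [HopfAlgebra R H]
    (n : ℕ) (hn : 1 ≤ n) :
    deltaE R H Coalgebra.counit Coalgebra.comul n Finset.univ =
      (tmap R H n fun _ => LinearMap.id - uem R H Coalgebra.counit) ∘ₗ
        Dit R H Coalgebra.counit Coalgebra.comul n :=
  statement1_general R H n

end
end

section
/- Let H be a Hopf algebra over a commutative ring, a, b ∈ H, and Φ a finite subset of ℕ. Then δ_Φ(ab) = Σ_{Λ ∪ Y = Φ} δ_Λ(a) δ_Y(b), where the sum runs over all pairs of subsets Λ, Y of Φ with Λ ∪ Y = Φ. -/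
/- STATEMENT 3: Let H be a Hopf algebra over a commutative ring, a, b ∈ H, and
Φ a finite subset (of positions). Then δ_Φ(ab) = Σ_{Λ ∪ Y = Φ} δ_Λ(a) δ_Y(b),
the sum over all pairs of subsets Λ, Y of Φ with Λ ∪ Y = Φ, the products taken
in H^{⊗n} after inserting units outside Λ (resp. Y). -/

open TensorProduct

noncomputable section

universe u

section Comb
variable {α : Type*} [DecidableEq α]


lemma alt_sum_compl (T : Finset α) :
    ∑ F ∈ T.powerset, ((-1:ℤ)) ^ (T.card - F.card) = if T = ∅ then 1 else 0 := by
  have h : ∀ F ∈ T.powerset, ((-1:ℤ)) ^ (T.card - F.card) = (-1) ^ T.card * (-1) ^ F.card := by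
    intro F hF
    rw [Finset.mem_powerset] at hF
    have hc : F.card ≤ T.card := Finset.card_le_card hF
    have h1 : ((-1:ℤ)) ^ (T.card - F.card) * (-1) ^ F.card = (-1) ^ T.card := by
      rw [← pow_add, Nat.sub_add_cancel hc]
    have h2 : ((-1:ℤ)) ^ F.card * (-1) ^ F.card = 1 := by
      rw [← pow_add, ← two_mul, pow_mul]; norm_num
    calc ((-1:ℤ)) ^ (T.card - F.card)
        = (-1) ^ (T.card - F.card) * ((-1) ^ F.card * (-1) ^ F.card) := by rw [h2, mul_one]
      _ = ((-1) ^ (T.card - F.card) * (-1) ^ F.card) * (-1) ^ F.card := by ring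
      _ = (-1) ^ T.card * (-1) ^ F.card := by rw [h1]
  rw [Finset.sum_congr rfl h, ← Finset.mul_sum, Finset.sum_powerset_neg_one_pow_card]
  split_ifs with hT
  · subst hT; simp
  · simp

lemma interval_sum (S Φ : Finset α) (hS : S ⊆ Φ) (e : Finset α → ℕ)
    (he : ∀ E, S ⊆ E → E ⊆ Φ → e E = e (S ∪ (E \ S))) :
    ∑ E ∈ Φ.powerset.filter (fun E => S ⊆ E), ((-1:ℤ)) ^ (e E) =
      ∑ F ∈ (Φ \ S).powerset, ((-1:ℤ)) ^ (e (S ∪ F)) := by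
  refine Finset.sum_nbij' (fun E => E \ S) (fun F => S ∪ F) ?_ ?_ ?_ ?_ ?_
  · intro E hE
    rw [Finset.mem_filter, Finset.mem_powerset] at hE
    rw [Finset.mem_powerset]
    exact Finset.sdiff_subset_sdiff hE.1 le_rfl
  · intro F hF
    rw [Finset.mem_powerset] at hF
    rw [Finset.mem_filter, Finset.mem_powerset]
    exact ⟨Finset.union_subset hS (hF.trans (Finset.sdiff_subset)), Finset.subset_union_left⟩
  · intro E hE
    rw [Finset.mem_filter, Finset.mem_powerset] at hE
    show S ∪ E \ S = E
    exact Finset.union_sdiff_of_subset hE.2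
  · intro F hF
    rw [Finset.mem_powerset] at hF
    show (S ∪ F) \ S = F
    have hd : Disjoint S F :=
      Finset.disjoint_left.mpr fun x hxS hxF => (Finset.mem_sdiff.mp (hF hxF)).2 hxS
    exact Finset.union_sdiff_cancel_left hd
  · intro E hE
    rw [Finset.mem_filter, Finset.mem_powerset] at hE
    rw [he E hE.2 hE.1]

lemma sdiff_empty_iff (S Φ : Finset α) (hS : S ⊆ Φ) : (Φ \ S = ∅) ↔ S = Φ := by
  rw [Finset.sdiff_eq_empty_iff_subset]
  exact ⟨fun h => le_antisymm hS h, fun h => h ▸ le_rfl⟩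

lemma card_union_of_sub (S : Finset α) {F Φ : Finset α} (hF : F ∈ (Φ \ S).powerset) :
    (S ∪ F).card = S.card + F.card := by
  rw [Finset.mem_powerset] at hF
  have hd : Disjoint S F :=
    Finset.disjoint_left.mpr fun x hxS hxF => (Finset.mem_sdiff.mp (hF hxF)).2 hxS
  exact Finset.card_union_of_disjoint hd

lemma alt_sum_high (S Φ : Finset α) (hS : S ⊆ Φ) :
    ∑ E ∈ Φ.powerset.filter (fun E => S ⊆ E), ((-1:ℤ)) ^ (Φ.card - E.card) =
      if S = Φ then 1 else 0 := by
  rw [interval_sum S Φ hS (fun E => Φ.card - E.card)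
    (fun E h1 h2 => by rw [Finset.union_sdiff_of_subset h1])]
  have key : (if (Φ \ S) = ∅ then (1:ℤ) else 0) = if S = Φ then 1 else 0 := by
    simp only [sdiff_empty_iff S Φ hS]
  rw [← key, ← alt_sum_compl (Φ \ S)]
  refine Finset.sum_congr rfl fun F hF => ?_
  congr 1
  have h1 := card_union_of_sub S hF
  have h2 : (Φ \ S).card + S.card = Φ.card := by
    rw [Finset.card_sdiff_add_card_eq_card hS]
  have h3 : F.card ≤ (Φ \ S).card := Finset.card_le_card (Finset.mem_powerset.mp hF)
  omega

lemma alt_sum_low (S Φ : Finset α) (hS : S ⊆ Φ) :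
    ∑ E ∈ Φ.powerset.filter (fun E => S ⊆ E), ((-1:ℤ)) ^ (E.card - S.card) =
      if S = Φ then 1 else 0 := by
  rw [interval_sum S Φ hS (fun E => E.card - S.card)
    (fun E h1 h2 => by rw [Finset.union_sdiff_of_subset h1])]
  have key : (if (Φ \ S) = ∅ then (1:ℤ) else 0) = if S = Φ then 1 else 0 := by
    simp only [sdiff_empty_iff S Φ hS]
  rw [← key, ← Finset.sum_powerset_neg_one_pow_card]
  refine Finset.sum_congr rfl fun F hF => ?_
  congr 1
  have h1 := card_union_of_sub S hF
  omega

lemma mobius {M : Type*} [AddCommGroup M] (f : Finset α → M) (E : Finset α) :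
    ∑ Λ ∈ E.powerset, ∑ Λ' ∈ Λ.powerset, ((-1:ℤ)) ^ (Λ.card - Λ'.card) • f Λ' = f E := by
  rw [Finset.sum_comm' (t' := E.powerset)
    (s' := fun Λ' => E.powerset.filter (fun Λ => Λ' ⊆ Λ))
    (fun Λ Λ' => by
      simp only [Finset.mem_powerset, Finset.mem_filter]
      exact ⟨fun ⟨h1, h2⟩ => ⟨⟨h1, h2⟩, h2.trans h1⟩, fun ⟨⟨h1, h2⟩, _⟩ => ⟨h1, h2⟩⟩)]
  have step : ∀ Λ' ∈ E.powerset,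
      ∑ Λ ∈ E.powerset.filter (fun Λ => Λ' ⊆ Λ), ((-1:ℤ)) ^ (Λ.card - Λ'.card) • f Λ' =
        if Λ' = E then f Λ' else 0 := by
    intro Λ' hΛ'
    rw [← Finset.sum_smul, alt_sum_low Λ' E (Finset.mem_powerset.mp hΛ'), ite_smul, one_smul,
      zero_smul]
  rw [Finset.sum_congr rfl step]
  simp

end Comb

section AlgSide


variable (R H : Type u) [CommRing R] [Ring H] [Bialgebra R H]

/-- Tensor-slot map as an algebra hom. -/
def TmapAlg : (n : ℕ) → (Fin n → (H →ₐ[R] H)) → ((Tpow R H n).X →ₐ[R] (Tpow R H n).X)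
  | 0, _ => AlgHom.id R R
  | 1, f => f 0
  | n + 2, f => Algebra.TensorProduct.map (f 0) (TmapAlg (n + 1) fun i => f i.succ)

/-- Iterated comultiplication as an algebra hom. -/
def DitAlg : (n : ℕ) → H →ₐ[R] (Tpow R H n).X
  | 0 => Bialgebra.counitAlgHom R H
  | 1 => AlgHom.id R H
  | n + 2 =>
    (Algebra.TensorProduct.map (AlgHom.id R H) (DitAlg (n + 1))).comp (Bialgebra.comulAlgHom R H)

lemma TmapAlg_toLin : ∀ (n : ℕ) (f : Fin n → (H →ₐ[R] H)),
    (TmapAlg R H n f).toLinearMap = tmap R H n (fun i => (f i).toLinearMap)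
  | 0, f => rfl
  | 1, f => rfl
  | n + 2, f => by
    show (Algebra.TensorProduct.map (f 0) (TmapAlg R H (n + 1) fun i => f i.succ)).toLinearMap
      = TensorProduct.map (f 0).toLinearMap (tmap R H (n + 1) fun i => (f i.succ).toLinearMap)
    rw [← TmapAlg_toLin (n + 1) (fun i => f i.succ)]
    exact TensorProduct.ext' fun x y => rfl

lemma DitAlg_toLin : ∀ (n : ℕ),
    (DitAlg R H n).toLinearMap = Dit R H Coalgebra.counit Coalgebra.comul n
  | 0 => rfl
  | 1 => rfl
  | n + 2 => by
    show ((Algebra.TensorProduct.map (AlgHom.id R H) (DitAlg R H (n + 1))).comp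
        (Bialgebra.comulAlgHom R H)).toLinearMap
      = (TensorProduct.map LinearMap.id (Dit R H Coalgebra.counit Coalgebra.comul (n + 1))) ∘ₗ
          Coalgebra.comul
    rw [← DitAlg_toLin (n + 1)]
    rw [AlgHom.comp_toLinearMap]
    congr 1

/-- `unit ∘ ε` as an algebra hom. -/
def uemAlg : H →ₐ[R] H := (Algebra.ofId R H).comp (Bialgebra.counitAlgHom R H)

lemma uemAlg_toLin : (uemAlg R H).toLinearMap = uem R H Coalgebra.counit := rfl

/-- `Δ_E` is multiplicative. -/
lemma DeltaE_mul (n : ℕ) (E : Finset (Fin n)) (a b : H) :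
    DeltaE R H Coalgebra.counit Coalgebra.comul n E (a * b) =
      DeltaE R H Coalgebra.counit Coalgebra.comul n E a *
        DeltaE R H Coalgebra.counit Coalgebra.comul n E b := by
  have key : DeltaE R H Coalgebra.counit Coalgebra.comul n E =
      ((TmapAlg R H n fun i => if i ∈ E then AlgHom.id R H else uemAlg R H).comp
        (DitAlg R H n)).toLinearMap := by
    have harg : (fun i => (if i ∈ E then AlgHom.id R H else uemAlg R H).toLinearMap) =
        fun i : Fin n => if i ∈ E then LinearMap.id else uem R H Coalgebra.counit :=
      funext fun i => by split_ifs <;> rfl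
    rw [AlgHom.comp_toLinearMap, TmapAlg_toLin, DitAlg_toLin, harg]
    rfl
  rw [key]
  simp only [AlgHom.toLinearMap_apply]
  exact map_mul _ a b

end AlgSide

/-- `δ_Φ(ab) = Σ_{Λ ∪ Y = Φ} δ_Λ(a) δ_Y(b)`. -/
theorem statement3 (R H : Type u) [CommRing R] [Ring H] [HopfAlgebra R H]
    (n : ℕ) (Φ : Finset (Fin n)) (a b : H) :
    deltaE R H Coalgebra.counit Coalgebra.comul n Φ (a * b) =
      ∑ Λ ∈ Φ.powerset, ∑ Y ∈ Φ.powerset,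
        if Λ ∪ Y = Φ then
          deltaE R H Coalgebra.counit Coalgebra.comul n Λ a *
            deltaE R H Coalgebra.counit Coalgebra.comul n Y b
        else 0 := by
  classical
  have hmob : ∀ (x : H) (E : Finset (Fin n)),
      ∑ Λ ∈ E.powerset, deltaE R H Coalgebra.counit Coalgebra.comul n Λ x =
        DeltaE R H Coalgebra.counit Coalgebra.comul n E x := by
    intro x E
    rw [← mobius (fun Λ => DeltaE R H Coalgebra.counit Coalgebra.comul n Λ x) E]
    refine Finset.sum_congr rfl fun Λ _ => ?_
    simp [deltaE, LinearMap.sum_apply, LinearMap.smul_apply]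
  have step1 : deltaE R H Coalgebra.counit Coalgebra.comul n Φ (a * b) =
      ∑ E ∈ Φ.powerset, ((-1:ℤ)) ^ (Φ.card - E.card) •
        (DeltaE R H Coalgebra.counit Coalgebra.comul n E (a * b)) := by
    simp [deltaE, LinearMap.sum_apply, LinearMap.smul_apply]
  rw [step1]
  have step2 : ∀ E ∈ Φ.powerset,
      ((-1:ℤ)) ^ (Φ.card - E.card) •
          (DeltaE R H Coalgebra.counit Coalgebra.comul n E (a * b)) =
        ∑ p ∈ E.powerset ×ˢ E.powerset, ((-1:ℤ)) ^ (Φ.card - E.card) •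
          (deltaE R H Coalgebra.counit Coalgebra.comul n p.1 a *
            deltaE R H Coalgebra.counit Coalgebra.comul n p.2 b) := by
    intro E _
    rw [DeltaE_mul, ← hmob a E, ← hmob b E, Finset.sum_mul_sum, ← Finset.sum_product',
      Finset.smul_sum]
  rw [Finset.sum_congr rfl step2]
  rw [Finset.sum_comm' (t' := Φ.powerset ×ˢ Φ.powerset)
    (s' := fun p => Φ.powerset.filter (fun E => p.1 ∪ p.2 ⊆ E))
    (fun E p => by
      simp only [Finset.mem_powerset, Finset.mem_product, Finset.mem_filter,
        Finset.union_subset_iff]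
      constructor
      · rintro ⟨h1, h2, h3⟩
        exact ⟨⟨h1, h2, h3⟩, h2.trans h1, h3.trans h1⟩
      · rintro ⟨⟨h1, h2, h3⟩, _, _⟩
        exact ⟨h1, h2, h3⟩)]
  have step3 : ∀ p ∈ Φ.powerset ×ˢ Φ.powerset,
      ∑ E ∈ Φ.powerset.filter (fun E => p.1 ∪ p.2 ⊆ E), ((-1:ℤ)) ^ (Φ.card - E.card) •
          (deltaE R H Coalgebra.counit Coalgebra.comul n p.1 a *
            deltaE R H Coalgebra.counit Coalgebra.comul n p.2 b) =
        if p.1 ∪ p.2 = Φ then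
          deltaE R H Coalgebra.counit Coalgebra.comul n p.1 a *
            deltaE R H Coalgebra.counit Coalgebra.comul n p.2 b
        else 0 := by
    intro p hp
    rw [Finset.mem_product, Finset.mem_powerset, Finset.mem_powerset] at hp
    rw [← Finset.sum_smul, alt_sum_high (p.1 ∪ p.2) Φ (Finset.union_subset hp.1 hp.2),
      ite_smul, one_smul, zero_smul]
  rw [Finset.sum_congr rfl step3, Finset.sum_product]

end
end

section
/- Let H be a Hopf algebra over a commutative ring, a, b ∈ H, and Φ a nonempty finite subset of ℕ. Then δ_Φ(ab − ba) = Σ_{Λ ∪ Y = Φ, Λ ∩ Y ≠ ∅} (δ_Λ(a) δ_Y(b) − δ_Y(b) δ_Λ(a)). -/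
/- STATEMENT 4: Let H be a Hopf algebra over a commutative ring, a, b ∈ H, and
Φ a nonempty finite subset of positions. Then
δ_Φ(ab − ba) = Σ_{Λ ∪ Y = Φ, Λ ∩ Y ≠ ∅} (δ_Λ(a) δ_Y(b) − δ_Y(b) δ_Λ(a)). -/

open TensorProduct

noncomputable section

universe u

/-!
Each `Δ_E` is an algebra map, so `δ_Φ(ab) = Σ_{E ⊆ Φ} ± Δ_E(a) Δ_E(b)`. Möbius inversion on the
Boolean lattice gives `Δ_E = Σ_{Λ ⊆ E} δ_Λ`; substituting, the signs summed over the interval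
`[Λ ∪ Y, Φ]` vanish unless `Λ ∪ Y = Φ`, whence `δ_Φ(ab) = Σ_{Λ ∪ Y = Φ} δ_Λ(a) δ_Y(b)`.
In the commutator the terms with `Λ ∩ Y = ∅` cancel: `δ_Λ(a)` is spanned by pure tensors with
scalar factors outside `Λ`, and two such elements with disjoint supports commute.
-/

lemma neg_one_pow_sub_eq_mul {a b c : ℕ} (hab : a ≤ b) (hbc : b ≤ c) :
    (-1 : ℤ) ^ (c - b) = (-1) ^ (c - a) * (-1) ^ (b - a) := by
  rw [show c - a = (c - b) + (b - a) by omega, pow_add, mul_assoc, ← pow_add,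
    Even.neg_one_pow ⟨_, rfl⟩, mul_one]

namespace Finset

variable {α : Type*} [DecidableEq α]

lemma sum_Icc_neg_one_pow_card_sub_left {A B : Finset α} (h : A ⊆ B) :
    ∑ C ∈ Icc A B, (-1 : ℤ) ^ (#C - #A) = if A = B then 1 else 0 := by
  rw [Icc_eq_image_powerset h, sum_image, sum_congr rfl, sum_powerset_neg_one_pow_card]
  · exact if_congr (sdiff_eq_empty_iff_subset.trans
      ⟨subset_antisymm h, fun hAB => hAB ▸ subset_rfl⟩) rfl rfl
  · intro T hT
    rw [card_union_of_disjoint (disjoint_of_subset_right (mem_powerset.1 hT) disjoint_sdiff),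
      Nat.add_sub_cancel_left]
  · intro T hT T' hT' hTT'
    have hdisj : ∀ {S}, S ∈ (B \ A).powerset → Disjoint A S := fun hS =>
      disjoint_of_subset_right (mem_powerset.1 hS) disjoint_sdiff
    rw [← union_sdiff_cancel_left (hdisj hT), ← union_sdiff_cancel_left (hdisj hT')]
    exact congrArg (· \ A) hTT'

lemma sum_Icc_neg_one_pow_card_sub_right {A B : Finset α} (h : A ⊆ B) :
    ∑ C ∈ Icc A B, (-1 : ℤ) ^ (#B - #C) = if A = B then 1 else 0 := by
  rw [sum_congr rfl fun C hC => neg_one_pow_sub_eq_mul (card_le_card (mem_Icc.1 hC).1)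
    (card_le_card (mem_Icc.1 hC).2), ← mul_sum, sum_Icc_neg_one_pow_card_sub_left h]
  split_ifs with hAB
  · rw [hAB, Nat.sub_self, pow_zero, one_mul]
  · rw [mul_zero]

variable {M : Type*} [AddCommGroup M]

lemma sum_powerset_sum_powerset_neg_one_pow_smul (f : Finset α → M) (E : Finset α) :
    ∑ Λ ∈ E.powerset, ∑ E' ∈ Λ.powerset, (-1 : ℤ) ^ (#Λ - #E') • f E' = f E := by
  rw [sum_comm' (t' := E.powerset) (s' := fun E' => Icc E' E)]
  · rw [sum_congr rfl fun E' hE' => by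
      rw [← sum_smul, sum_Icc_neg_one_pow_card_sub_left (mem_powerset.1 hE'), ite_smul,
        one_smul, zero_smul]]
    rw [sum_ite_eq', if_pos (mem_powerset_self E)]
  · intro Λ E'
    simp only [mem_powerset, mem_Icc]
    exact ⟨fun h => ⟨⟨h.2, h.1⟩, h.2.trans h.1⟩, fun h => ⟨h.1.2, h.1.1⟩⟩

lemma sum_powerset_neg_one_pow_smul_sum_powerset_sum_powerset (Φ : Finset α)
    (g : Finset α → Finset α → M) :
    ∑ E ∈ Φ.powerset, (-1 : ℤ) ^ (#Φ - #E) • ∑ Λ ∈ E.powerset, ∑ Y ∈ E.powerset, g Λ Y =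
      ∑ Λ ∈ Φ.powerset, ∑ Y ∈ Φ.powerset, if Λ ∪ Y = Φ then g Λ Y else 0 := by
  simp_rw [← sum_product', smul_sum]
  rw [sum_comm' (t' := Φ.powerset ×ˢ Φ.powerset) (s' := fun p => Icc (p.1 ∪ p.2) Φ)]
  · refine sum_congr rfl fun p hp => ?_
    rw [← sum_smul, sum_Icc_neg_one_pow_card_sub_right, ite_smul, one_smul, zero_smul]
    rw [mem_product, mem_powerset, mem_powerset] at hp
    exact union_subset hp.1 hp.2
  · intro E p
    simp only [mem_powerset, mem_product, mem_Icc, union_subset_iff]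
    constructor
    · rintro ⟨hE, hΛ, hY⟩
      exact ⟨⟨⟨hΛ, hY⟩, hE⟩, hΛ.trans hE, hY.trans hE⟩
    · rintro ⟨⟨hΛY, hE⟩, -⟩
      exact ⟨hE, hΛY⟩

end Finset

section AlgHom

variable (R H : Type u) [CommRing R] [Ring H] [Bialgebra R H]

def tmapAlgHom : (n : ℕ) → (Fin n → (H →ₐ[R] H)) → ((Tpow R H n).X →ₐ[R] (Tpow R H n).X)
  | 0, _ => AlgHom.id R _
  | 1, f => f 0
  | n + 2, f => Algebra.TensorProduct.map (f 0) (tmapAlgHom (n + 1) fun i => f i.succ)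

lemma toLinearMap_tmapAlgHom : ∀ (n : ℕ) (f : Fin n → (H →ₐ[R] H)),
    (tmapAlgHom R H n f).toLinearMap = tmap R H n fun i => (f i).toLinearMap
  | 0, _ => rfl
  | 1, _ => rfl
  | n + 2, f => by
    rw [tmap, ← toLinearMap_tmapAlgHom (n + 1)]
    rfl

def ditAlgHom : (n : ℕ) → H →ₐ[R] (Tpow R H n).X
  | 0 => Bialgebra.counitAlgHom R H
  | 1 => AlgHom.id R H
  | n + 2 => (Algebra.TensorProduct.map (AlgHom.id R H) (ditAlgHom (n + 1))).comp
      (Bialgebra.comulAlgHom R H)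

lemma toLinearMap_ditAlgHom : ∀ n : ℕ,
    (ditAlgHom R H n).toLinearMap = Dit R H Coalgebra.counit Coalgebra.comul n
  | 0 => rfl
  | 1 => rfl
  | n + 2 => by
    rw [Dit, ← toLinearMap_ditAlgHom (n + 1)]
    rfl

end AlgHom

section ProductFormula

variable {R H : Type u} [CommRing R] [Ring H]

lemma DeltaE_eq_sum_deltaE [Algebra R H] (cu : H →ₗ[R] R) (cm : H →ₗ[R] H ⊗[R] H) {n : ℕ}
    (E : Finset (Fin n)) (a : H) :
    DeltaE R H cu cm n E a = ∑ Λ ∈ E.powerset, deltaE R H cu cm n Λ a := by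
  simp only [deltaE, LinearMap.sum_apply, LinearMap.smul_apply]
  exact (Finset.sum_powerset_sum_powerset_neg_one_pow_smul (DeltaE R H cu cm n · a) E).symm

lemma deltaE_mul [Bialgebra R H] {n : ℕ} (Φ : Finset (Fin n)) (a b : H) :
    deltaE R H Coalgebra.counit Coalgebra.comul n Φ (a * b) =
      ∑ Λ ∈ Φ.powerset, ∑ Y ∈ Φ.powerset,
        if Λ ∪ Y = Φ then
          deltaE R H Coalgebra.counit Coalgebra.comul n Λ a *
            deltaE R H Coalgebra.counit Coalgebra.comul n Y b
        else 0 := by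
  rw [← Finset.sum_powerset_neg_one_pow_smul_sum_powerset_sum_powerset, deltaE,
    LinearMap.sum_apply]
  simp only [LinearMap.smul_apply, DeltaE_mul]
  simp only [DeltaE_eq_sum_deltaE, Finset.sum_mul_sum]

end ProductFormula

section TensorSpan

variable (R : Type u) [CommRing R]

lemma commute_of_mem_map₂_mk {A B : Type*} [Ring A] [Algebra R A] [Ring B] [Algebra R B]
    {p p' : Submodule R A} {q q' : Submodule R B}
    (hp : ∀ x ∈ p, ∀ y ∈ p', Commute x y) (hq : ∀ x ∈ q, ∀ y ∈ q', Commute x y)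
    {x y : A ⊗[R] B} (hx : x ∈ Submodule.map₂ (TensorProduct.mk R A B) p q)
    (hy : y ∈ Submodule.map₂ (TensorProduct.mk R A B) p' q') : Commute x y := by
  suffices Submodule.map₂ (TensorProduct.mk R A B) p q ≤ Subalgebra.toSubmodule
      (Subalgebra.centralizer R (Submodule.map₂ (TensorProduct.mk R A B) p' q' : Set _)) from
    (Subalgebra.mem_centralizer_iff R).1 (this hx) y hy |>.symm
  refine Submodule.map₂_le.2 fun a ha b hb => (Subalgebra.mem_centralizer_iff R).2 ?_
  suffices Submodule.map₂ (TensorProduct.mk R A B) p' q' ≤ Subalgebra.toSubmodule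
      (Subalgebra.centralizer R {a ⊗ₜ[R] b}) from
    fun g hg => ((Subalgebra.mem_centralizer_iff R).1 (this hg) _ rfl).symm
  refine Submodule.map₂_le.2 fun a' ha' b' hb' => (Subalgebra.mem_centralizer_iff R).2 ?_
  rintro _ rfl
  exact ((hp a ha a' ha').tmul (hq b hb b' hb')).eq

variable (H : Type u) [Ring H] [Algebra R H]

/-- The span of the pure tensors whose `i`-th factor lies in `p i`. -/
def tensorSpan : (n : ℕ) → (Fin n → Submodule R H) → Submodule R (Tpow R H n).X
  | 0, _ => ⊤
  | 1, p => p 0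
  | n + 2, p => Submodule.map₂ (TensorProduct.mk R H (Tpow R H (n + 1)).X) (p 0)
      (tensorSpan (n + 1) fun i => p i.succ)

lemma range_tmap_le_tensorSpan : ∀ (n : ℕ) (f : Fin n → (H →ₗ[R] H)) (p : Fin n → Submodule R H),
    (∀ i, LinearMap.range (f i) ≤ p i) → LinearMap.range (tmap R H n f) ≤ tensorSpan R H n p
  | 0, _, _, _ => le_top
  | 1, _, _, h => h 0
  | n + 2, f, _, h => (TensorProduct.range_map (f 0) _).le.trans <|
    Submodule.map₂_le_map₂ (h 0) (range_tmap_le_tensorSpan (n + 1) _ _ fun i => h i.succ)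

lemma commute_of_mem_tensorSpan : ∀ (n : ℕ) (p q : Fin n → Submodule R H),
    (∀ i, ∀ x ∈ p i, ∀ y ∈ q i, Commute x y) →
      ∀ x ∈ tensorSpan R H n p, ∀ y ∈ tensorSpan R H n q, Commute x y
  | 0, _, _, _ => fun x _ y _ => mul_comm (G := R) x y
  | 1, _, _, h => h 0
  | n + 2, _, _, h => fun _ hx _ hy => commute_of_mem_map₂_mk R (h 0)
      (commute_of_mem_tensorSpan (n + 1) _ _ fun i => h i.succ) hx hy

end TensorSpan

section Support

variable (R H : Type u) [CommRing R] [Ring H] [Algebra R H]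

def slotsOn (n : ℕ) (E : Finset (Fin n)) (i : Fin n) : Submodule R H :=
  if i ∈ E then ⊤ else 1

variable {R H}

lemma commute_of_mem_slotsOn {n : ℕ} {E Y : Finset (Fin n)} (h : Disjoint E Y) (i : Fin n) :
    ∀ x ∈ slotsOn R H n E i, ∀ y ∈ slotsOn R H n Y i, Commute x y := by
  intro x hx y hy
  by_cases hi : i ∈ E
  · rw [slotsOn, if_neg (Finset.disjoint_left.1 h hi)] at hy
    obtain ⟨r, rfl⟩ := Submodule.mem_one.1 hy
    exact (Algebra.commute_algebraMap_left r x).symm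
  · rw [slotsOn, if_neg hi] at hx
    obtain ⟨r, rfl⟩ := Submodule.mem_one.1 hx
    exact Algebra.commute_algebraMap_left r y

lemma DeltaE_mem_tensorSpan_slotsOn (cu : H →ₗ[R] R) (cm : H →ₗ[R] H ⊗[R] H) {n : ℕ}
    {E' E : Finset (Fin n)} (h : E' ⊆ E) (a : H) :
    DeltaE R H cu cm n E' a ∈ tensorSpan R H n (slotsOn R H n E) := by
  refine range_tmap_le_tensorSpan R H n _ _ (fun i => ?_) (LinearMap.mem_range_self _ _)
  by_cases hi : i ∈ E'
  · simp only [slotsOn, hi, h hi, if_true, le_top]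
  · rw [if_neg hi, uem]
    refine (LinearMap.range_comp_le_range _ _).trans ?_
    rw [← Submodule.one_eq_range, slotsOn]
    split_ifs
    exacts [le_top, le_rfl]

lemma deltaE_mem_tensorSpan_slotsOn (cu : H →ₗ[R] R) (cm : H →ₗ[R] H ⊗[R] H) {n : ℕ}
    (E : Finset (Fin n)) (a : H) :
    deltaE R H cu cm n E a ∈ tensorSpan R H n (slotsOn R H n E) := by
  rw [deltaE, LinearMap.sum_apply]
  exact Submodule.sum_mem _ fun E' hE' =>
    zsmul_mem (DeltaE_mem_tensorSpan_slotsOn cu cm (Finset.mem_powerset.1 hE') a) _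

lemma commute_deltaE_of_disjoint (cu : H →ₗ[R] R) (cm : H →ₗ[R] H ⊗[R] H) {n : ℕ}
    {Λ Y : Finset (Fin n)} (h : Disjoint Λ Y) (a b : H) :
    Commute (deltaE R H cu cm n Λ a) (deltaE R H cu cm n Y b) :=
  commute_of_mem_tensorSpan R H n _ _ (commute_of_mem_slotsOn h) _
    (deltaE_mem_tensorSpan_slotsOn cu cm Λ a) _ (deltaE_mem_tensorSpan_slotsOn cu cm Y b)

end Support

theorem statement4_general (R H : Type u) [CommRing R] [Ring H] [HopfAlgebra R H]
    (n : ℕ) (Φ : Finset (Fin n)) (a b : H) :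
    deltaE R H Coalgebra.counit Coalgebra.comul n Φ (a * b - b * a) =
      ∑ Λ ∈ Φ.powerset, ∑ Y ∈ Φ.powerset,
        if Λ ∪ Y = Φ ∧ (Λ ∩ Y).Nonempty then
          deltaE R H Coalgebra.counit Coalgebra.comul n Λ a *
              deltaE R H Coalgebra.counit Coalgebra.comul n Y b -
            deltaE R H Coalgebra.counit Coalgebra.comul n Y b *
              deltaE R H Coalgebra.counit Coalgebra.comul n Λ a
        else 0 := by
  rw [map_sub, deltaE_mul, deltaE_mul]
  set δ := deltaE R H Coalgebra.counit Coalgebra.comul n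
  have swap : (∑ Λ ∈ Φ.powerset, ∑ Y ∈ Φ.powerset, if Λ ∪ Y = Φ then δ Λ b * δ Y a else 0) =
      ∑ Λ ∈ Φ.powerset, ∑ Y ∈ Φ.powerset, if Λ ∪ Y = Φ then δ Y b * δ Λ a else 0 := by
    rw [Finset.sum_comm]
    simp only [Finset.union_comm]
  rw [swap, ← Finset.sum_sub_distrib]
  refine Finset.sum_congr rfl fun Λ _ => ?_
  rw [← Finset.sum_sub_distrib]
  refine Finset.sum_congr rfl fun Y _ => ?_
  by_cases hΦ : Λ ∪ Y = Φ
  · by_cases hΛY : (Λ ∩ Y).Nonempty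
    · simp only [hΦ, hΛY, and_self, if_true]
    · have hcomm : Commute (δ Λ a) (δ Y b) := commute_deltaE_of_disjoint _ _
        (Finset.disjoint_iff_inter_eq_empty.2 (Finset.not_nonempty_iff_eq_empty.1 hΛY)) a b
      simp only [hΦ, hΛY, and_false, if_true, if_false, hcomm.eq, sub_self]
  · simp only [hΦ, false_and, if_false, sub_zero]

/-- for nonempty `Φ`,
`δ_Φ(ab − ba) = Σ_{Λ ∪ Y = Φ, Λ ∩ Y ≠ ∅} (δ_Λ(a) δ_Y(b) − δ_Y(b) δ_Λ(a))`. -/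
theorem statement4 (R H : Type u) [CommRing R] [Ring H] [HopfAlgebra R H]
    (n : ℕ) (Φ : Finset (Fin n)) (hΦ : Φ.Nonempty) (a b : H) :
    deltaE R H Coalgebra.counit Coalgebra.comul n Φ (a * b - b * a) =
      ∑ Λ ∈ Φ.powerset, ∑ Y ∈ Φ.powerset,
        if Λ ∪ Y = Φ ∧ (Λ ∩ Y).Nonempty then
          deltaE R H Coalgebra.counit Coalgebra.comul n Λ a *
              deltaE R H Coalgebra.counit Coalgebra.comul n Y b -
            deltaE R H Coalgebra.counit Coalgebra.comul n Y b *
              deltaE R H Coalgebra.counit Coalgebra.comul n Λ a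
        else 0 :=
  statement4_general R H n Φ a b
end
end

section
/- Let H be a topologically free Hopf k[[h]]-algebra, J := Ker(ε), and let H^∨ be the h-adic completion of H^× = Σ_{n≥0}(h^{-1}J)ⁿ. Then for every j ∈ J, the element j^∨ := h^{-1}j satisfies Δ(j^∨) ≡ j^∨ ⊗ 1 + 1 ⊗ j^∨ modulo h·(H^∨ ⊗̂ H^∨). Hence the images of such elements in H^∨/hH^∨ are primitive. -/
/- STATEMENT 9: Let H be a topologically free Hopf k[[h]]-algebra,
J := Ker(ε). Then for every j ∈ J, the element j^∨ := h^{-1}j satisfies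
Δ(j^∨) ≡ j^∨ ⊗ 1 + 1 ⊗ j^∨ modulo h·(H^∨ ⊗̂ H^∨); hence its image in
H^∨/hH^∨ is primitive.  We model the localization H ⊗_{k[[h]]} k((h)) as
LaurentSeries k ⊗_{k[[h]]} H, j^∨ = h^{-1} ⊗ j, and express the congruence
as membership of the difference in h·(H ⊗ H)^× (which maps into
h·(H^∨ ⊗̂ H^∨) under completion). -/

open scoped TensorProduct

noncomputable section

variable (k : Type) [Field k] (H : Type) [Ring H] [HopfAlgebra (PowerSeries k) H]

/-- `I := ε⁻¹(h·k[[h]]) = J + hH`. -/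
def Isub : Submodule (PowerSeries k) H :=
  Submodule.comap (Coalgebra.counit : H →ₗ[PowerSeries k] PowerSeries k)
    (Ideal.span {(PowerSeries.X : PowerSeries k)})

/-- The image of `p ⊗ q` inside `H ⊗ H`. -/
def tsub (p q : Submodule (PowerSeries k) H) :
    Submodule (PowerSeries k) (H ⊗[PowerSeries k] H) :=
  LinearMap.range (TensorProduct.map p.subtype q.subtype)

/-- `I_{H⊗H} := I ⊗ H + H ⊗ I`. -/
def IHH : Submodule (PowerSeries k) (H ⊗[PowerSeries k] H) :=
  tsub k H (Isub k H) ⊤ ⊔ tsub k H ⊤ (Isub k H)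

/-- `(H ⊗ H)^× := Σ_m h^{-m} I_{H⊗H}^m` inside `k((h)) ⊗ (H ⊗ H)`. -/
def HHtimes : Submodule (PowerSeries k)
    (LaurentSeries k ⊗[PowerSeries k] (H ⊗[PowerSeries k] H)) :=
  ⨆ m : ℕ, Submodule.span (PowerSeries k)
    {z | ∃ w ∈ (IHH k H) ^ m, z = (HahnSeries.single (-(m : ℤ)) (1 : k)) ⊗ₜ[PowerSeries k] w}

/-- The coproduct extended to the localization. -/
def DL : LaurentSeries k ⊗[PowerSeries k] H →ₗ[PowerSeries k]
    LaurentSeries k ⊗[PowerSeries k] (H ⊗[PowerSeries k] H) :=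
  TensorProduct.map LinearMap.id (Coalgebra.comul : H →ₗ[PowerSeries k] H ⊗[PowerSeries k] H)

/-- The projection `id - η ∘ ε` onto `J`. -/
def Pproj : H →ₗ[PowerSeries k] H :=
  LinearMap.id - (Algebra.linearMap (PowerSeries k) H).comp
    (Coalgebra.counit : H →ₗ[PowerSeries k] PowerSeries k)

lemma Pproj_mem_Isub (a : H) : Pproj k H a ∈ Isub k H := by
  simp only [Isub, Submodule.mem_comap, Pproj, LinearMap.sub_apply, LinearMap.id_apply,
    LinearMap.comp_apply, map_sub, Algebra.linearMap_apply]
  have : (Coalgebra.counit : H →ₗ[PowerSeries k] PowerSeries k)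
      (algebraMap (PowerSeries k) H (Coalgebra.counit a)) = Coalgebra.counit a := by
    rw [Algebra.algebraMap_eq_smul_one, map_smul, Bialgebra.counit_one, smul_eq_mul, mul_one]
  rw [this, sub_self]
  exact Submodule.zero_mem _

lemma mapPP_mem (x : H ⊗[PowerSeries k] H) :
    TensorProduct.map (Pproj k H) (Pproj k H) x ∈ (IHH k H) ^ 2 := by
  induction x using TensorProduct.induction_on with
  | zero => simp
  | add a b ha hb => rw [map_add]; exact Submodule.add_mem _ ha hb
  | tmul a b =>
    rw [TensorProduct.map_tmul, sq]
    have h1 : Pproj k H a ⊗ₜ[PowerSeries k] (1 : H) ∈ IHH k H := by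
      apply Submodule.mem_sup_left
      exact ⟨⟨Pproj k H a, Pproj_mem_Isub k H a⟩ ⊗ₜ ⟨1, trivial⟩, rfl⟩
    have h2 : (1 : H) ⊗ₜ[PowerSeries k] Pproj k H b ∈ IHH k H := by
      apply Submodule.mem_sup_right
      exact ⟨⟨1, trivial⟩ ⊗ₜ ⟨Pproj k H b, Pproj_mem_Isub k H b⟩, rfl⟩
    have := Submodule.mul_mem_mul h1 h2
    rwa [Algebra.TensorProduct.tmul_mul_tmul, one_mul, mul_one] at this

lemma mapPP_comul (j : H)
    (hj : j ∈ LinearMap.ker (Coalgebra.counit : H →ₗ[PowerSeries k] PowerSeries k)) :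
    TensorProduct.map (Pproj k H) (Pproj k H) (Coalgebra.comul j) =
      Coalgebra.comul j - j ⊗ₜ[PowerSeries k] (1 : H) - (1 : H) ⊗ₜ[PowerSeries k] j := by
  have hεj : (Coalgebra.counit : H →ₗ[PowerSeries k] PowerSeries k) j = 0 :=
    LinearMap.mem_ker.mp hj
  set η := Algebra.linearMap (PowerSeries k) H
  set ε := (Coalgebra.counit : H →ₗ[PowerSeries k] PowerSeries k)
  -- compute the four pieces
  have hR : TensorProduct.map (η.comp ε) LinearMap.id (Coalgebra.comul j)
      = (1 : H) ⊗ₜ[PowerSeries k] j := by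
    have : TensorProduct.map (η.comp ε) LinearMap.id
        = (TensorProduct.map η LinearMap.id).comp (ε.rTensor H) := by
      ext a b; simp [LinearMap.rTensor_tmul]
    rw [this, LinearMap.comp_apply, Coalgebra.rTensor_counit_comul,
      TensorProduct.map_tmul]
    simp [η]
  have hL : TensorProduct.map LinearMap.id (η.comp ε) (Coalgebra.comul j)
      = j ⊗ₜ[PowerSeries k] (1 : H) := by
    have : TensorProduct.map LinearMap.id (η.comp ε)
        = (TensorProduct.map LinearMap.id η).comp (ε.lTensor H) := by
      ext a b; simp [LinearMap.lTensor_tmul]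
    rw [this, LinearMap.comp_apply, Coalgebra.lTensor_counit_comul,
      TensorProduct.map_tmul]
    simp [η]
  have hB : TensorProduct.map (η.comp ε) (η.comp ε) (Coalgebra.comul j) = 0 := by
    have : TensorProduct.map (η.comp ε) (η.comp ε)
        = (TensorProduct.map (η.comp ε) η).comp (ε.lTensor H) := by
      ext a b; simp [LinearMap.lTensor_tmul]
    rw [this, LinearMap.comp_apply, Coalgebra.lTensor_counit_comul,
      TensorProduct.map_tmul, LinearMap.comp_apply, hεj]
    simp
  have expand : TensorProduct.map (Pproj k H) (Pproj k H)
      = TensorProduct.map LinearMap.id LinearMap.id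
        - TensorProduct.map (η.comp ε) LinearMap.id
        - TensorProduct.map LinearMap.id (η.comp ε)
        + TensorProduct.map (η.comp ε) (η.comp ε) := by
    have h1 : Pproj k H = LinearMap.id - η.comp ε := rfl
    rw [h1]
    ext a b
    simp [TensorProduct.map_tmul, TensorProduct.tmul_sub, TensorProduct.sub_tmul]
    abel
  rw [expand]
  simp only [LinearMap.add_apply, LinearMap.sub_apply, hR, hL, hB,
    TensorProduct.map_id, LinearMap.id_apply, add_zero]
  abel

/-- for `j ∈ J = Ker ε` and `j^∨ := h^{-1} j`, one has
`Δ(j^∨) − j^∨ ⊗ 1 − 1 ⊗ j^∨ ∈ h·(H^∨ ⊗̂ H^∨)` (expressed here before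
completion, as membership in `h·(H ⊗ H)^×`); hence `j^∨ mod h` is
primitive in `H^∨/hH^∨`. -/
theorem statement9
    (htf : ∀ a : H, (PowerSeries.X : PowerSeries k) • a = 0 → a = 0)
    [IsAdicComplete (Ideal.span {(PowerSeries.X : PowerSeries k)}) H]
    (j : H) (hj : j ∈ LinearMap.ker (Coalgebra.counit : H →ₗ[PowerSeries k] PowerSeries k)) :
    ∃ z ∈ HHtimes k H,
      DL k H ((HahnSeries.single (-1 : ℤ) (1 : k)) ⊗ₜ[PowerSeries k] j) -
          (HahnSeries.single (-1 : ℤ) (1 : k)) ⊗ₜ[PowerSeries k] (j ⊗ₜ[PowerSeries k] (1 : H)) -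
          (HahnSeries.single (-1 : ℤ) (1 : k)) ⊗ₜ[PowerSeries k] ((1 : H) ⊗ₜ[PowerSeries k] j) =
        (PowerSeries.X : PowerSeries k) • z := by
  /- proof -/

  set w := TensorProduct.map (Pproj k H) (Pproj k H) (Coalgebra.comul j) with hw
  refine ⟨(HahnSeries.single (-(2:ℤ)) (1 : k)) ⊗ₜ[PowerSeries k] w, ?_, ?_⟩
  · apply Submodule.mem_iSup_of_mem 2
    apply Submodule.subset_span
    exact ⟨w, mapPP_mem k H _, by norm_num⟩
  · have key := mapPP_comul k H j hj
    rw [DL, TensorProduct.map_tmul, LinearMap.id_apply,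
      TensorProduct.smul_tmul', ← TensorProduct.tmul_sub, ← TensorProduct.tmul_sub, ← key]
    congr 1
    rw [Algebra.smul_def, LaurentSeries.coe_algebraMap, HahnSeries.ofPowerSeries_X,
      HahnSeries.single_mul_single, one_mul]
    norm_num

end
end

section
/- Let H ∈ HA_⊗̂ (topologically free Hopf k[[h]]-algebra) and K ∈ HA_⊗̃ with a Hopf pairing ⟨·,·⟩ : H × K → k[[h]]. Then for every y ∈ H' and every product c_1⋯c_n with c_i ∈ I_K := ε_K^{-1}(h k[[h]]), one has ⟨y, c_1 ⋯ c_n⟩ ∈ hⁿ k[[h]]. Consequently the pairing extends to a k[[h]]-valued pairing H' × K^∨ → k[[h]]. -/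
/- STATEMENT 16: Let H be a topologically free Hopf k[[h]]-algebra and K a
topological Hopf k[[h]]-algebra, with a Hopf pairing ⟨·,·⟩ : H × K → k[[h]].
Then for every y ∈ H' and every product c_1⋯c_m with
c_i ∈ I_K := ε_K^{-1}(h k[[h]]), one has ⟨y, c_1 ⋯ c_m⟩ ∈ h^m k[[h]].
(Consequently the pairing extends to a k[[h]]-valued pairing
H' × K^∨ → k[[h]].) -/

open TensorProduct

noncomputable section

universe u

/-- Drinfeld's subset `H' = { a ∈ H | δ_n(a) ∈ tⁿ·H^{⊗n} for all n }`. -/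
def Hset (R H : Type u) [CommRing R] [Ring H] [Algebra R H]
    (cu : H →ₗ[R] R) (cm : H →ₗ[R] H ⊗[R] H) (t : R) : Set H :=
  {a : H | ∀ n : ℕ, ∃ y : (Tpow R H n).X, deltaE R H cu cm n Finset.univ a = t ^ n • y}

/-!
Under a Hopf pairing, `c ↦ ⟨·, c⟩` is multiplicative from `K` into the convolution algebra of
functionals on `H`, so `⟨y, c₁ ⋯ cₘ⟩ = (φ₁ ⋆ ⋯ ⋆ φₘ)(y)`. Write `φᵢ = ψᵢ + ε(cᵢ) • ε` with
`ψᵢ(1) = 0` and expand: each term is a product of the `ε(cᵢ) ∈ (h)` over the omitted indices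
times a convolution `(ψ_{i₁} ⋆ ⋯ ⋆ ψ_{iₜ})(y)`. As every `ψ` kills `1`, the inclusion–exclusion
defining `δₜ` only keeps the full term, so this convolution is `(ψ_{i₁} ⊗ ⋯ ⊗ ψ_{iₜ})(δₜ y)`,
which lies in `hᵗ k[[h]]` because `y ∈ H'`.
-/

open WithConv

theorem pow_length_dvd_apply_prod {R A : Type*} [CommRing R] [Ring A] [Algebra R A]
    (f : A →ₗ[R] R) (S : Set A) (x : R)
    (hS : ∀ L : List A, (∀ a ∈ L, a ∈ S) → x ^ L.length ∣ f L.prod)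
    (L : List A) (hL : ∀ a ∈ L, ∃ r, x ∣ r ∧ a - algebraMap R A r ∈ S) :
    x ^ L.length ∣ f L.prod := by
  -- Split the next factor as `(a - r) + r`: its `S`-part joins the prefix `P`, and `x ∣ r`.
  suffices ∀ P : List A, (∀ a ∈ P, a ∈ S) → x ^ (P.length + L.length) ∣ f (P.prod * L.prod) by
    simpa using this [] (by simp)
  induction L with
  | nil => simpa using hS
  | cons a L ih =>
    intro P hP
    obtain ⟨r, ⟨s, rfl⟩, ha⟩ := hL a List.mem_cons_self
    have hsplit : P.prod * (a :: L).prod =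
        (P ++ [a - algebraMap R A (x * s)]).prod * L.prod + (x * s) • (P.prod * L.prod) := by
      rw [List.prod_append, List.prod_singleton, List.prod_cons, ← mul_smul_comm,
        Algebra.smul_def]
      noncomm_ring
    have h₁ := ih (fun b hb => hL b (List.mem_cons_of_mem a hb)) (P ++ [_])
      (by simpa [or_imp, forall_and] using ⟨hP, ha⟩)
    have h₂ := ih (fun b hb => hL b (List.mem_cons_of_mem a hb)) P hP
    rw [hsplit, map_add, map_smul, smul_eq_mul]
    refine dvd_add (by simpa [pow_succ, add_assoc, add_comm 1] using h₁) ?_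
    rw [List.length_cons, ← add_assoc, pow_succ', mul_assoc]
    exact mul_dvd_mul_left x (dvd_mul_of_dvd_right h₂ s)

theorem TensorProduct.lid_self_eq_mul' {R : Type*} [CommSemiring R] :
    (TensorProduct.lid R R).toLinearMap = LinearMap.mul' R R := by
  ext
  simp

section TensorFunctional

variable {R H : Type u} [CommRing R] [Ring H] [Algebra R H]

def tensorFunctional : (n : ℕ) → (Fin n → (H →ₗ[R] R)) → ((Tpow R H n).X →ₗ[R] R)
  | 0, _ => LinearMap.id
  | 1, β => β 0
  | n + 2, β =>
      LinearMap.mul' R R ∘ₗ TensorProduct.map (β 0) (tensorFunctional (n + 1) fun i => β i.succ)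

theorem tensorFunctional_comp_tmap : ∀ (n : ℕ) (β : Fin n → (H →ₗ[R] R))
    (f : Fin n → (H →ₗ[R] H)),
    tensorFunctional n β ∘ₗ tmap R H n f = tensorFunctional n fun i => β i ∘ₗ f i
  | 0, _, _ => rfl
  | 1, _, _ => rfl
  | n + 2, β, f => by
      change (LinearMap.mul' R R ∘ₗ _) ∘ₗ TensorProduct.map _ _ = LinearMap.mul' R R ∘ₗ _
      rw [LinearMap.comp_assoc, ← TensorProduct.map_comp, tensorFunctional_comp_tmap (n + 1)]

variable [Coalgebra R H]

theorem comp_uem_eq_zero {β : H →ₗ[R] R} (hβ : β 1 = 0) :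
    β ∘ₗ uem R H Coalgebra.counit = 0 := by
  ext a
  simp [uem, Algebra.algebraMap_eq_smul_one, hβ]

theorem tensorFunctional_comp_Dit : ∀ (n : ℕ) (β : Fin n → (H →ₗ[R] R)),
    tensorFunctional n β ∘ₗ Dit R H Coalgebra.counit Coalgebra.comul n =
      ((List.ofFn fun i => toConv (β i)).prod).ofConv
  | 0, _ => rfl
  | 1, β => by change β 0 = _; simp
  | n + 2, β => by
      change (LinearMap.mul' R R ∘ₗ _) ∘ₗ (TensorProduct.map LinearMap.id _ ∘ₗ _) = _
      rw [LinearMap.comp_assoc, ← LinearMap.comp_assoc _ _ (TensorProduct.map _ _),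
        ← TensorProduct.map_comp, tensorFunctional_comp_Dit (n + 1), LinearMap.comp_id,
        List.ofFn_succ (n := n + 1), List.prod_cons]
      rfl

theorem tensorFunctional_comp_DeltaE (n : ℕ) (β : Fin n → (H →ₗ[R] R)) (E : Finset (Fin n)) :
    tensorFunctional n β ∘ₗ DeltaE R H Coalgebra.counit Coalgebra.comul n E =
      ((List.ofFn fun i =>
        toConv (if i ∈ E then β i else β i ∘ₗ uem R H Coalgebra.counit)).prod).ofConv := by
  rw [DeltaE, ← LinearMap.comp_assoc, tensorFunctional_comp_tmap, ← tensorFunctional_comp_Dit]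
  congr! 3 with i
  split_ifs <;> rfl

theorem tensorFunctional_deltaE_univ {n : ℕ} {β : Fin n → (H →ₗ[R] R)}
    (hβ : ∀ i, β i 1 = 0) (a : H) :
    tensorFunctional n β (deltaE R H Coalgebra.counit Coalgebra.comul n Finset.univ a) =
      (List.ofFn fun i => toConv (β i)).prod a := by
  classical
  rw [deltaE, LinearMap.sum_apply, map_sum, Finset.sum_eq_single Finset.univ]
  · simp [← LinearMap.comp_apply, tensorFunctional_comp_DeltaE]
  · intro E _ hE
    obtain ⟨i, -, hi⟩ := Finset.exists_of_ssubset (Finset.ssubset_univ_iff.2 hE)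
    rw [LinearMap.smul_apply, map_zsmul, ← LinearMap.comp_apply, tensorFunctional_comp_DeltaE,
      List.prod_eq_zero, ofConv_zero, LinearMap.zero_apply, smul_zero]
    exact List.mem_ofFn.2 ⟨i, by simp [hi, comp_uem_eq_zero (hβ i)]⟩
  · simp

end TensorFunctional

theorem pow_length_dvd_prod_apply_of_mem_Hset {R H : Type u} [CommRing R] [Ring H] [Algebra R H]
    [Coalgebra R H] {x : R} {y : H} (hy : y ∈ Hset R H Coalgebra.counit Coalgebra.comul x)
    (L : List (WithConv (H →ₗ[R] R))) (hL : ∀ ψ ∈ L, ψ 1 = 0) :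
    x ^ L.length ∣ L.prod y := by
  obtain ⟨z, hz⟩ := hy L.length
  have hβ : ∀ i : Fin L.length, L[i].ofConv 1 = 0 := fun i => hL _ (List.getElem_mem _)
  refine ⟨tensorFunctional L.length (fun i => L[i].ofConv) z, ?_⟩
  rw [← smul_eq_mul, ← map_smul, ← hz, tensorFunctional_deltaE_univ hβ]
  simp

section Pairing

variable {R H K : Type u} [CommRing R] [Ring H] [Algebra R H] [Coalgebra R H] [Ring K]
  [Algebra R K]

def pairingHom (B : H →ₗ[R] K →ₗ[R] R)
    (hB1 : ∀ (x : H) (y₁ y₂ : K), B x (y₁ * y₂) =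
      TensorProduct.lid R R (TensorProduct.map (B.flip y₁) (B.flip y₂) (Coalgebra.comul x)))
    (hB3 : ∀ x : H, B x 1 = Coalgebra.counit x) :
    K →* WithConv (H →ₗ[R] R) where
  toFun c := toConv (B.flip c)
  map_one' := by ext x; simp [hB3]
  map_mul' c₁ c₂ := by
    ext x
    rw [LinearMap.convMul_apply, ← TensorProduct.lid_self_eq_mul']
    exact hB1 x c₁ c₂

end Pairing

theorem statement16_general (k : Type) [Field k]
    (H K : Type) [Ring H] [HopfAlgebra (PowerSeries k) H]
    [Ring K] [HopfAlgebra (PowerSeries k) K]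
    -- the Hopf pairing:
    (B : H →ₗ[PowerSeries k] K →ₗ[PowerSeries k] PowerSeries k)
    (hB1 : ∀ (x : H) (y₁ y₂ : K), B x (y₁ * y₂) =
      (TensorProduct.lid (PowerSeries k) (PowerSeries k))
        (TensorProduct.map (B.flip y₁) (B.flip y₂) (Coalgebra.comul x)))
    (hB3 : ∀ x : H, B x 1 = Coalgebra.counit x)
    (hB4 : ∀ y : K, B 1 y = Coalgebra.counit y) :
    ∀ y ∈ Hset (PowerSeries k) H Coalgebra.counit Coalgebra.comul PowerSeries.X,
      ∀ (m : ℕ) (c : Fin m → K),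
        (∀ i, (Coalgebra.counit : K →ₗ[PowerSeries k] PowerSeries k) (c i) ∈
          Ideal.span {(PowerSeries.X : PowerSeries k)}) →
        B y (List.ofFn c).prod ∈
          Ideal.span {(PowerSeries.X : PowerSeries k) ^ m} := by
  intro y hy m c hc
  set φ := pairingHom B hB1 hB3
  have hprod : B y (List.ofFn c).prod = ((List.ofFn c).map φ).prod y := by
    rw [← map_list_prod]
    rfl
  have hfactor : ∀ ψ ∈ (List.ofFn c).map φ, ∃ r, PowerSeries.X ∣ r ∧
      (ψ - algebraMap (PowerSeries k) _ r) 1 = 0 := by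
    simp only [List.mem_map, List.mem_ofFn]
    rintro _ ⟨_, ⟨i, rfl⟩, rfl⟩
    exact ⟨B 1 (c i), hB4 (c i) ▸ Ideal.mem_span_singleton.1 (hc i), by simp [φ, pairingHom]⟩
  rw [Ideal.mem_span_singleton, hprod]
  simpa using pow_length_dvd_apply_prod (A := WithConv (H →ₗ[PowerSeries k] PowerSeries k))
    (LinearMap.applyₗ y ∘ₗ (WithConv.linearEquiv _ _).toLinearMap) {ψ | ψ 1 = 0} _
    (fun L hL => pow_length_dvd_prod_apply_of_mem_Hset hy L hL) _ hfactor

/-- for a Hopf pairing `B`, every `y ∈ H'` and all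
`c_1, …, c_m ∈ I_K` one has `B(y, c_1 ⋯ c_m) ∈ h^m·k[[h]]`. -/
theorem statement16 (k : Type) [Field k]
    (H K : Type) [Ring H] [HopfAlgebra (PowerSeries k) H]
    [Ring K] [HopfAlgebra (PowerSeries k) K]
    -- H is topologically free:
    (htf : ∀ a : H, (PowerSeries.X : PowerSeries k) • a = 0 → a = 0)
    [IsAdicComplete (Ideal.span {(PowerSeries.X : PowerSeries k)}) H]
    -- the Hopf pairing:
    (B : H →ₗ[PowerSeries k] K →ₗ[PowerSeries k] PowerSeries k)
    (hB1 : ∀ (x : H) (y₁ y₂ : K), B x (y₁ * y₂) =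
      (TensorProduct.lid (PowerSeries k) (PowerSeries k))
        (TensorProduct.map (B.flip y₁) (B.flip y₂) (Coalgebra.comul x)))
    (hB2 : ∀ (x₁ x₂ : H) (y : K), B (x₁ * x₂) y =
      (TensorProduct.lid (PowerSeries k) (PowerSeries k))
        (TensorProduct.map (B x₁) (B x₂) (Coalgebra.comul y)))
    (hB3 : ∀ x : H, B x 1 = Coalgebra.counit x)
    (hB4 : ∀ y : K, B 1 y = Coalgebra.counit y)
    (hB5 : ∀ (x : H) (y : K),
      B ((HopfAlgebra.antipode (PowerSeries k) : H →ₗ[PowerSeries k] H) x) y =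
        B x ((HopfAlgebra.antipode (PowerSeries k) : K →ₗ[PowerSeries k] K) y)) :
    ∀ y ∈ Hset (PowerSeries k) H Coalgebra.counit Coalgebra.comul PowerSeries.X,
      ∀ (m : ℕ) (c : Fin m → K),
        (∀ i, (Coalgebra.counit : K →ₗ[PowerSeries k] PowerSeries k) (c i) ∈
          Ideal.span {(PowerSeries.X : PowerSeries k)}) →
        B y (List.ofFn c).prod ∈
          Ideal.span {(PowerSeries.X : PowerSeries k) ^ m} :=
  statement16_general k H K B hB1 hB3 hB4

end
end
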